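/- Lemma 4.1 (equivalence of spectral-singularity equations): let u ∈ (0,1), β > 0, ℓ ≥ 0, and suppose D := (2−u⁴)·cos(β/u) + u⁴·(1−2u⁴)·cosh(βu) ≠ 0. Set S := √(u^{−2} − u²), A₁ := (u⁴−2)·cos(β/u) + u⁴·(2u⁴−1)·cosh(βu), A₂ := 2√(1−u⁴)·(u⁶·sinh(βu) − sin(β/u)), and B := u⁴·(cosh(βu) − cos(β/u)). Then the system of equations A₁ = B·cos(2βℓS) and A₂ = −B·sin(2βℓS) holds if and only if: g(u,β) = 0, and there exists an integer n with 2βℓS = arctan(A₂/D) + πn and (−1)^n = sign(A₁). -/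

import Mathlib

/-- The function `g(u,β)` whose roots `u ∈ (0,1)` determine the spectral singularities of the
PT-symmetric waveguide with gain-and-loss amplitude `γ = β²/2`. (Note that for `u = 0` the
formula evaluates to `1`, the limit value as `u → 0⁺`, since in Lean `β/0 = 0`.) -/
noncomputable def g (u β : ℝ) : ℝ :=
  u^4 * (1 - u^4) * Real.cosh (β * u) * Real.cos (β / u)
    - 2 * u^6 * Real.sinh (β * u) * Real.sin (β / u) + 1 - u^12

/-!
The system says that `(A₁, -A₂) = B (cos θ, sin θ)` with `θ = 2βℓS` and
`B = u⁴(cosh βu - cos(β/u)) > 0`. Such a polar form exists iff `A₁² + A₂² = B²`, and it pins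
down `θ` modulo `2π` through `tan θ = -A₂/A₁ = A₂/D` (as `D = -A₁`) and the sign of `cos θ`,
which is that of `A₁`. The Pythagorean identities for `(cos, sin)` and `(cosh, sinh)` turn
`A₁² + A₂² - B²` into `4(1 - u⁴) g(u,β)`.
-/

open Real Set

theorem Real.sign_mul_abs (x : ℝ) : sign x * |x| = x := by
  rcases lt_trichotomy x 0 with hx | rfl | hx
  · rw [sign_of_neg hx, abs_of_neg hx, neg_one_mul, neg_neg]
  · rw [abs_zero, mul_zero]
  · rw [sign_of_pos hx, abs_of_pos hx, one_mul]

theorem Real.sign_mul_of_pos {r : ℝ} (hr : 0 < r) (x : ℝ) : sign (r * x) = sign x := by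
  rcases lt_trichotomy x 0 with hx | rfl | hx
  · rw [sign_of_neg hx, sign_of_neg (mul_neg_of_pos_of_neg hr hx)]
  · rw [mul_zero]
  · rw [sign_of_pos hx, sign_of_pos (mul_pos hr hx)]

theorem exists_eq_arctan_tan_add_int_mul_pi {θ : ℝ} (h : cos θ ≠ 0) :
    ∃ n : ℤ, θ = arctan (tan θ) + π * n ∧ (-1 : ℝ) ^ n = sign (cos θ) := by
  obtain ⟨n, φ, hφ, rfl⟩ : ∃ (n : ℤ) (φ : ℝ), φ ∈ Ioo (-(π / 2)) (π / 2) ∧ θ = φ + n * π := by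
    have hmem := sub_toIocDiv_zsmul_mem_Ioc pi_pos (-(π / 2)) θ
    set n := toIocDiv pi_pos (-(π / 2)) θ
    rw [zsmul_eq_mul, neg_add_eq_sub, sub_half] at hmem
    have hθ : θ = (θ - n * π) + n * π := by ring
    refine ⟨n, θ - n * π, ⟨hmem.1, hmem.2.lt_of_ne ?_⟩, hθ⟩
    intro hφ
    rw [hθ, hφ, cos_add_int_mul_pi, cos_pi_div_two, mul_zero] at h
    exact h rfl
  rw [cos_add_int_mul_pi] at h ⊢
  rw [tan_add_int_mul_pi, arctan_tan hφ.1 hφ.2]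
  refine ⟨n, by ring, ?_⟩
  have hpos : 0 < cos φ := cos_pos_of_mem_Ioo hφ
  rcases n.even_or_odd with hn | hn
  · rw [hn.neg_one_zpow, one_mul, sign_of_pos hpos]
  · rw [hn.neg_one_zpow, neg_one_mul, sign_neg, sign_of_pos hpos]

theorem eq_mul_cos_and_eq_mul_sin_iff {x y r θ : ℝ} (hr : 0 < r) (hx : x ≠ 0) :
    x = r * cos θ ∧ y = r * sin θ ↔
      x ^ 2 + y ^ 2 = r ^ 2 ∧ ∃ n : ℤ, θ = arctan (y / x) + π * n ∧ (-1 : ℝ) ^ n = sign x := by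
  constructor
  · rintro ⟨rfl, rfl⟩
    have hcos : cos θ ≠ 0 := right_ne_zero_of_mul hx
    refine ⟨by linear_combination r ^ 2 * sin_sq_add_cos_sq θ, ?_⟩
    rw [mul_div_mul_left _ _ hr.ne', ← tan_eq_sin_div_cos, sign_mul_of_pos hr]
    exact exists_eq_arctan_tan_add_int_mul_pi hcos
  · rintro ⟨hsq, n, rfl, hn⟩
    have hroot : √(1 + (y / x) ^ 2) = r / |x| := by
      rw [← sqrt_sq (div_nonneg hr.le (abs_nonneg x)), div_pow, div_pow, sq_abs, ← hsq]
      congr 1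
      field_simp
    rw [mul_comm π, cos_add_int_mul_pi, sin_add_int_mul_pi, hn, cos_arctan, sin_arctan, hroot]
    constructor
    · field_simp
      rw [sign_mul_abs]
    · field_simp
      rw [mul_assoc, sign_mul_abs]

theorem sq_add_sq_sub_sq_eq_mul_g (u β : ℝ) (hu : u ^ 4 ≤ 1) :
    ((u^4 - 2) * cos (β / u) + u^4 * (2*u^4 - 1) * cosh (β * u)) ^ 2
        + (2 * √(1 - u^4) * (u^6 * sinh (β * u) - sin (β / u))) ^ 2
        - (u^4 * (cosh (β * u) - cos (β / u))) ^ 2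
      = 4 * (1 - u^4) * g u β := by
  rw [g]
  linear_combination
    4 * (u^6 * sinh (β * u) - sin (β / u)) ^ 2 * sq_sqrt (sub_nonneg.2 hu)
      + 4 * (1 - u^4) * sin_sq_add_cos_sq (β / u)
      - 4 * (1 - u^4) * u^12 * cosh_sq_sub_sinh_sq (β * u)

theorem stmt_16_general (u β ℓ : ℝ) (hu0 : 0 < u) (hu1 : u < 1) (hβ : 0 < β)
    (hD : (2 - u^4) * Real.cos (β / u) + u^4 * (1 - 2*u^4) * Real.cosh (β * u) ≠ 0) :
    (((u^4 - 2) * Real.cos (β / u) + u^4 * (2*u^4 - 1) * Real.cosh (β * u)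
        = u^4 * (Real.cosh (β * u) - Real.cos (β / u))
            * Real.cos (2 * β * ℓ * Real.sqrt (u^(-2:ℤ) - u^2))) ∧
      (2 * Real.sqrt (1 - u^4) * (u^6 * Real.sinh (β * u) - Real.sin (β / u))
        = -(u^4 * (Real.cosh (β * u) - Real.cos (β / u)))
            * Real.sin (2 * β * ℓ * Real.sqrt (u^(-2:ℤ) - u^2)))) ↔
    (g u β = 0 ∧
      ∃ n : ℤ, 2 * β * ℓ * Real.sqrt (u^(-2:ℤ) - u^2)
          = Real.arctan ((2 * Real.sqrt (1 - u^4) * (u^6 * Real.sinh (β * u) - Real.sin (β / u)))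
              / ((2 - u^4) * Real.cos (β / u) + u^4 * (1 - 2*u^4) * Real.cosh (β * u)))
            + Real.pi * n ∧
        (-1 : ℝ)^n = Real.sign ((u^4 - 2) * Real.cos (β / u)
            + u^4 * (2*u^4 - 1) * Real.cosh (β * u))) := by
  set A₁ := (u^4 - 2) * cos (β / u) + u^4 * (2*u^4 - 1) * cosh (β * u)
  set A₂ := 2 * √(1 - u^4) * (u^6 * sinh (β * u) - sin (β / u))
  set B := u^4 * (cosh (β * u) - cos (β / u))
  have hDA : (2 - u^4) * cos (β / u) + u^4 * (1 - 2*u^4) * cosh (β * u) = -A₁ := by ring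
  rw [hDA, neg_ne_zero] at hD
  have hu4 : u ^ 4 < 1 := pow_lt_one₀ hu0.le hu1 four_ne_zero
  have hB : 0 < B := mul_pos (by positivity)
    (by linarith [cos_le_one (β / u), one_lt_cosh.2 (mul_pos hβ hu0).ne'])
  have hg : A₁ ^ 2 + (-A₂) ^ 2 = B ^ 2 ↔ g u β = 0 := by
    rw [neg_sq, ← sub_eq_zero, sq_add_sq_sub_sq_eq_mul_g u β hu4.le,
      mul_eq_zero, or_iff_right (by linarith)]
  rw [hDA, div_neg, ← neg_div, neg_mul, ← neg_eq_iff_eq_neg,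
    eq_mul_cos_and_eq_mul_sin_iff hB hD, hg]

theorem stmt_16 (u β ℓ : ℝ) (hu0 : 0 < u) (hu1 : u < 1) (hβ : 0 < β) (hℓ : 0 ≤ ℓ)
    (hD : (2 - u^4) * Real.cos (β / u) + u^4 * (1 - 2*u^4) * Real.cosh (β * u) ≠ 0) :
    (((u^4 - 2) * Real.cos (β / u) + u^4 * (2*u^4 - 1) * Real.cosh (β * u)
        = u^4 * (Real.cosh (β * u) - Real.cos (β / u))
            * Real.cos (2 * β * ℓ * Real.sqrt (u^(-2:ℤ) - u^2))) ∧
      (2 * Real.sqrt (1 - u^4) * (u^6 * Real.sinh (β * u) - Real.sin (β / u))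
        = -(u^4 * (Real.cosh (β * u) - Real.cos (β / u)))
            * Real.sin (2 * β * ℓ * Real.sqrt (u^(-2:ℤ) - u^2)))) ↔
    (g u β = 0 ∧
      ∃ n : ℤ, 2 * β * ℓ * Real.sqrt (u^(-2:ℤ) - u^2)
          = Real.arctan ((2 * Real.sqrt (1 - u^4) * (u^6 * Real.sinh (β * u) - Real.sin (β / u)))
              / ((2 - u^4) * Real.cos (β / u) + u^4 * (1 - 2*u^4) * Real.cosh (β * u)))
            + Real.pi * n ∧
        (-1 : ℝ)^n = Real.sign ((u^4 - 2) * Real.cos (β / u)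
            + u^4 * (2*u^4 - 1) * Real.cosh (β * u))) :=
  stmt_16_general u β ℓ hu0 hu1 hβ hD
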